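/- Let Ω ⊂ ℝ² be a bounded open set whose complement has at most k bounded connected components. Then for every t ∈ [0, ρ(Ω)), the interior parallel set Ω(t) = { x ∈ Ω : dist(x, ∂Ω) > t } also has a complement with at most k bounded connected components. -/
import Mathlib


open MeasureTheory Metric Set Filter Topology Bornology ENNReal

noncomputable section

abbrev E2 := EuclideanSpace ℝ (Fin 2)

/-- divergence of a vector field on ℝ² -/
def divg (φ : E2 → E2) (x : E2) : ℝ := ∑ i, fderiv ℝ φ x (EuclideanSpace.single i 1) i

/-- the set of admissible values in De Giorgi's definition of perimeter -/
def perimSet (Ω : Set E2) : Set ℝ :=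
  {r | ∃ φ : E2 → E2, ContDiff ℝ 1 φ ∧ HasCompactSupport φ ∧ (∀ x, ‖φ x‖ ≤ 1) ∧
        r = ∫ x in Ω, divg φ x}

/-- De Giorgi perimeter -/
def perimeter (Ω : Set E2) : ℝ := sSup (perimSet Ω)

def HasFinitePerimeter (Ω : Set E2) : Prop := BddAbove (perimSet Ω)

/-- torsional rigidity via the variational formula -/
def torsion (Ω : Set E2) : ℝ :=
  sSup ({0} ∪ {r | ∃ u : E2 → ℝ, ContDiff ℝ 1 u ∧ HasCompactSupport u ∧ tsupport u ⊆ Ω ∧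
      (∫ x in Ω, ‖fderiv ℝ u x‖ ^ 2) ≠ 0 ∧
      r = (∫ x in Ω, u x) ^ 2 / ∫ x in Ω, ‖fderiv ℝ u x‖ ^ 2})

def inradius (Ω : Set E2) : ℝ := sSup ((fun x => infDist x (frontier Ω)) '' Ω)

def innerParallel (Ω : Set E2) (t : ℝ) : Set E2 := {x ∈ Ω | t < infDist x (frontier Ω)}

def boundedComponents (s : Set E2) : Set (Set E2) :=
  {C | ∃ x ∈ s, C = connectedComponentIn s x ∧ IsBounded C}

/-- `s` has at most `k` bounded connected components -/
def nBddCompLe (s : Set E2) (k : ℕ) : Prop :=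
  (boundedComponents s).Finite ∧ (boundedComponents s).ncard ≤ k

/-- the class 𝒜ₖ -/
def memA (k : ℕ) (Ω : Set E2) : Prop :=
  Ω.Nonempty ∧ IsOpen Ω ∧ IsBounded Ω ∧ nBddCompLe Ωᶜ k

/-- points of density `t` of `s` -/
def densityPts (s : Set E2) (t : ℝ≥0∞) : Set E2 :=
  {x | Tendsto (fun r => volume (s ∩ ball x r) / volume (ball x r)) (𝓝[>] (0:ℝ)) (𝓝 t)}

/-- area of the interior parallel set -/
def Afun (Ω : Set E2) (t : ℝ) : ℝ := (volume (innerParallel Ω t)).toReal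

/-- length of the interior parallel -/
def Lfun (Ω : Set E2) (t : ℝ) : ℝ :=
  (μH[1] ({x ∈ Ω | infDist x (frontier Ω) = t})).toReal

/-- a bounded open set with Lipschitz boundary -/
def IsLipschitzDomain (Ω : Set E2) : Prop :=
  ∀ x ∈ frontier Ω, ∃ (g : E2 ≃ₗᵢ[ℝ] E2) (f : ℝ → ℝ) (K : NNReal) (ε : ℝ),
    0 < ε ∧ LipschitzWith K f ∧
    Ω ∩ ball x ε = {y ∈ ball x ε | f ((g (y - x)) 0) < (g (y - x)) 1}

/-- the scale-free shape functional F_q -/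
def Fq (q : ℝ) (Ω : Set E2) : ℝ :=
  perimeter Ω * torsion Ω ^ q / (volume Ω).toReal ^ (2 * q + 1 / 2)

end

section Aux

open Metric Set Bornology EMetric

/-- A segment from a point of an open set to a point outside meets the frontier
within distance `dist z y`. -/
lemma exists_frontier_dist_le {Ω : Set E2} (hΩ : IsOpen Ω) {z y : E2}
    (hz : z ∈ Ω) (hy : y ∉ Ω) : ∃ w ∈ frontier Ω, dist z w ≤ dist z y := by
  by_cases hyc : y ∈ closure Ω
  · exact ⟨y, ⟨hyc, by rwa [hΩ.interior_eq]⟩, le_rfl⟩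
  · by_contra hcon
    push_neg at hcon
    have hsegd : ∀ w ∈ segment ℝ z y, dist z w ≤ dist z y := by
      intro w hw
      have : segment ℝ z y ⊆ closedBall z (dist z y) :=
        (convex_closedBall z (dist z y)).segment_subset
          (Metric.mem_closedBall_self dist_nonneg) (by simp [Metric.mem_closedBall, dist_comm])
      simpa [Metric.mem_closedBall, dist_comm] using this hw
    have hcover : segment ℝ z y ⊆ Ω ∪ (closure Ω)ᶜ := by
      intro w hw
      by_cases hwc : w ∈ closure Ω
      · left
        have hwf : w ∉ frontier Ω := fun hwf => absurd (hsegd w hw) (not_le.2 (hcon w hwf))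
        have : w ∈ interior Ω := by
          by_contra hwint
          exact hwf ⟨hwc, hwint⟩
        rwa [hΩ.interior_eq] at this
      · exact Or.inr hwc
    obtain ⟨w, -, hw1, hw2⟩ :=
      (convex_segment z y).isPreconnected Ω (closure Ω)ᶜ hΩ isClosed_closure.isOpen_compl
        hcover ⟨z, left_mem_segment ℝ z y, hz⟩ ⟨y, right_mem_segment ℝ z y, hyc⟩
    exact hw2 (subset_closure hw1)

/-- For `z` in an open set `Ω`, the distance to the frontier is at most the distance
to the complement. -/
lemma infDist_frontier_le_infDist_compl {Ω : Set E2} (hΩ : IsOpen Ω) {z : E2}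
    (hz : z ∈ Ω) (hne : Ωᶜ.Nonempty) :
    infDist z (frontier Ω) ≤ infDist z Ωᶜ := by
  obtain ⟨y, hyc, hyd⟩ := (hΩ.isClosed_compl).exists_infDist_eq_dist hne z
  obtain ⟨w, hwf, hwd⟩ := exists_frontier_dist_le hΩ hz hyc
  calc infDist z (frontier Ω) ≤ dist z w := infDist_le_dist_of_mem hwf
    _ ≤ dist z y := hwd
    _ = infDist z Ωᶜ := hyd.symm

/-- The closed `t`-thickening of a preconnected set is preconnected. -/
lemma isPreconnected_cthickening {C : Set E2} (hC : IsPreconnected C) (hne : C.Nonempty)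
    {t : ℝ} (ht : 0 ≤ t) : IsPreconnected (cthickening t C) := by
  obtain ⟨x₀, hx₀⟩ := hne
  have hx₀c : x₀ ∈ closure C := subset_closure hx₀
  have heq : cthickening t C = ⋃₀ ((fun z => closure C ∪ closedBall z t) '' closure C) := by
    rw [Metric.cthickening_eq_biUnion_closedBall C ht]
    apply Subset.antisymm
    · intro w hw
      simp only [mem_iUnion, exists_prop] at hw
      obtain ⟨z, hz, hwz⟩ := hw
      exact ⟨closure C ∪ closedBall z t, ⟨z, hz, rfl⟩, Or.inr hwz⟩
    · rintro w ⟨s, ⟨z, hz, rfl⟩, hw⟩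
      rcases hw with hw | hw
      · simp only [mem_iUnion, exists_prop]
        exact ⟨w, hw, mem_closedBall_self ht⟩
      · simp only [mem_iUnion, exists_prop]
        exact ⟨z, hz, hw⟩
  rw [heq]
  apply isPreconnected_sUnion x₀
  · rintro s ⟨z, hz, rfl⟩
    exact Or.inl hx₀c
  · rintro s ⟨z, hz, rfl⟩
    exact IsPreconnected.union z hz (mem_closedBall_self ht) hC.closure
      (convex_closedBall z t).isPreconnected

end Aux

/-- The interior parallel sets of a set in `𝒜ₖ` remain in `𝒜ₖ`:
their complement has at most `k` bounded connected components. -/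
theorem innerParallel_mem_Ak (k : ℕ) (Ω : Set E2) (h : memA k Ω)
    (t : ℝ) (ht : t ∈ Ico 0 (inradius Ω)) :
    nBddCompLe ((innerParallel Ω t)ᶜ) k := by
  obtain ⟨hne, hopen, hbdd, hfin, hcard⟩ := h
  obtain ⟨ht0, -⟩ := ht
  -- the complement of Ω is nonempty and closed
  have hΩc_ne : Ωᶜ.Nonempty := by
    by_contra hc
    rw [not_nonempty_iff_eq_empty, compl_empty_iff] at hc
    exact NormedSpace.unbounded_univ ℝ E2 (hc ▸ hbdd)
  set S := (innerParallel Ω t)ᶜ with hSdef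
  -- key: every bounded component of S contains a bounded component of Ωᶜ
  have key : ∀ D : Set E2, ∃ C : Set E2,
      D ∈ boundedComponents S → C ∈ boundedComponents Ωᶜ ∧ C.Nonempty ∧ C ⊆ D := by
    intro D
    by_cases hD : D ∈ boundedComponents S
    swap
    · exact ⟨∅, fun hD' => absurd hD' hD⟩
    obtain ⟨x, hxS, hDeq, hDb⟩ := hD
    -- x is within distance t of Ωᶜ
    have hxd : infDist x Ωᶜ ≤ t := by
      have hxS' : ¬(x ∈ Ω ∧ t < infDist x (frontier Ω)) := hxS
      by_cases hxΩ : x ∈ Ω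
      · have hfr : infDist x (frontier Ω) ≤ t := by
          by_contra hlt
          exact hxS' ⟨hxΩ, lt_of_not_ge hlt⟩
        obtain ⟨y₀, hy₀⟩ := hΩc_ne
        obtain ⟨w, hwf, -⟩ := exists_frontier_dist_le hopen hxΩ hy₀
        have hsub : frontier Ω ⊆ Ωᶜ := by
          intro w hw
          rw [← hopen.interior_eq]
          exact fun hwi => hw.2 hwi
        exact le_trans (infDist_le_infDist_of_subset hsub ⟨w, hwf⟩) hfr
      · rw [infDist_zero_of_mem (show x ∈ Ωᶜ from hxΩ)]
        exact ht0
    -- nearest point y in Ωᶜ and its connected component C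
    obtain ⟨y, hyc, hyd⟩ := (hopen.isClosed_compl).exists_infDist_eq_dist hΩc_ne x
    set C := connectedComponentIn Ωᶜ y with hCdef
    have hyC : y ∈ C := mem_connectedComponentIn hyc
    have hCne : C.Nonempty := ⟨y, hyC⟩
    have hCsub : C ⊆ Ωᶜ := connectedComponentIn_subset _ _
    have hCconn : IsPreconnected C := isPreconnected_connectedComponentIn
    -- the thickening N of C is preconnected, lies in S, and contains x
    set N := Metric.cthickening t C with hNdef
    have hNconn : IsPreconnected N := isPreconnected_cthickening hCconn hCne ht0
    have hNS : N ⊆ S := by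
      intro z hz
      have hzC : infDist z C ≤ t := by
        have h1 : EMetric.infEdist z C ≤ ENNReal.ofReal t := Metric.mem_cthickening_iff.1 hz
        have h2 : (EMetric.infEdist z C).toReal ≤ (.ofReal t : ℝ≥0∞).toReal :=
          ENNReal.toReal_mono ENNReal.ofReal_ne_top h1
        rwa [ENNReal.toReal_ofReal ht0] at h2
      intro hzi
      obtain ⟨hzΩ, hzt⟩ := hzi
      have : infDist z (frontier Ω) ≤ t :=
        le_trans (infDist_frontier_le_infDist_compl hopen hzΩ hΩc_ne)
          (le_trans (infDist_le_infDist_of_subset hCsub hCne) hzC)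
      exact absurd hzt (not_lt.2 this)
    have hxN : x ∈ N := by
      rw [hNdef, Metric.mem_cthickening_iff]
      calc EMetric.infEdist x C ≤ edist x y := EMetric.infEdist_le_edist_of_mem hyC
        _ = ENNReal.ofReal (dist x y) := edist_dist x y
        _ ≤ ENNReal.ofReal t := ENNReal.ofReal_le_ofReal (hyd ▸ hxd)
    have hND : N ⊆ D := by
      rw [hDeq]
      exact hNconn.subset_connectedComponentIn hxN hNS
    have hCD : C ⊆ D := (Metric.self_subset_cthickening C).trans hND
    exact ⟨C, fun _ => ⟨⟨y, hyc, hCdef, hDb.subset hCD⟩, hCne, hCD⟩⟩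
  choose g hg using key
  have himg : g '' boundedComponents S ⊆ boundedComponents Ωᶜ := by
    rintro _ ⟨D, hD, rfl⟩
    exact (hg D hD).1
  have hinj : Set.InjOn g (boundedComponents S) := by
    intro D1 h1 D2 h2 heq
    obtain ⟨z, hz1⟩ := (hg D1 h1).2.1
    have hz2 : z ∈ g D2 := heq ▸ hz1
    have hzD1 : z ∈ D1 := (hg D1 h1).2.2 hz1
    have hzD2 : z ∈ D2 := (hg D2 h2).2.2 hz2
    obtain ⟨x1, -, rfl, -⟩ := h1
    obtain ⟨x2, -, rfl, -⟩ := h2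
    have e1 : connectedComponentIn S x1 = connectedComponentIn S z := connectedComponentIn_eq hzD1
    have e2 : connectedComponentIn S x2 = connectedComponentIn S z := connectedComponentIn_eq hzD2
    exact e1.trans e2.symm
  have hfin' : (boundedComponents S).Finite :=
    Set.Finite.of_finite_image (hfin.subset himg) hinj
  refine ⟨hfin', ?_⟩
  calc (boundedComponents S).ncard = (g '' boundedComponents S).ncard :=
        (Set.ncard_image_of_injOn hinj).symm
    _ ≤ (boundedComponents Ωᶜ).ncard := Set.ncard_le_ncard himg hfin
    _ ≤ k := hcard
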